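/- arXiv:1209.0340 — 2 statements merged into one kernel-verified Lean document; each statement's English description precedes it below -/
import Mathlib

section
/- Let a be a positive definite symmetric bilinear form on ℝⁿ and b a nonzero covector. For y with b·y > 0, the Hessian g of ½F² of the Kropina metric F(y) = a(y,y)/(b·y) is given by g_{ij} = (2α²/β²)a_{ij} + (3α⁴/β⁴)b_i b_j − (4α²/β³)(a_{0i}b_j + a_{0j}b_i) + (4/β²)a_{0i}a_{0j}, where α² = a(y,y), β = b·y, a_{0i} = a_{ij}y^j, and this matrix is positive definite. -/
/-!
Off the hyperplane `β = 0` the energy `½F² = ½(α²/β)²` is a rational function of `y`. Its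
derivative in the direction `v` is `α²(2β a(v, y) - α² b·v)/β³`, which is again rational on the
open cone, and differentiating it once more gives `g`.

For positivity, with `p = a(x, y)` and `s = b·x`,
`g(x, x) = (2/3)α² a(x, x)/β² + ((4βp - 3α²s)² + 4β²(α² a(x, x) - p²))/(3β⁴)`,
and the last summand is nonnegative by the Cauchy–Schwarz inequality for `a`.
-/

open Matrix

section Calculus

variable {E : Type*} [NormedAddCommGroup E] [NormedSpace ℝ E] {c d : E → ℝ} {c' d' : E →L[ℝ] ℝ}
  {x : E}

theorem HasFDerivAt.div (hc : HasFDerivAt c c' x) (hd : HasFDerivAt d d' x) (hx : d x ≠ 0) :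
    HasFDerivAt (fun y => c y / d y) ((d x ^ 2)⁻¹ • (d x • c' - c x • d')) x := by
  have hinv := (hasDerivAt_inv hx).comp_hasFDerivAt x hd
  refine (hc.mul hinv).congr_fderiv ?_
  ext v
  simp only [_root_.add_apply, _root_.smul_apply, _root_.sub_apply, smul_eq_mul,
    Function.comp_apply]
  field_simp
  ring

theorem iteratedFDeriv_two_apply_eq_fderiv_fderiv_apply {F : Type*} [NormedAddCommGroup F]
    [NormedSpace ℝ F] {f : E → F} (hf : ContDiffAt ℝ 2 f x) (u v : E) :
    iteratedFDeriv ℝ 2 f x ![u, v] = fderiv ℝ (fun w => fderiv ℝ f w v) x u := by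
  have hdf : DifferentiableAt ℝ (fderiv ℝ f) x :=
    (hf.fderiv_right (m := 1) le_rfl).differentiableAt one_ne_zero
  rw [iteratedFDeriv_two_apply, fderiv_clm_apply hdf (differentiableAt_const v)]
  simp

end Calculus

variable {ι : Type*} [Fintype ι]

noncomputable def dotProductCLM (c : ι → ℝ) : (ι → ℝ) →L[ℝ] ℝ :=
  LinearMap.toContinuousLinearMap (dotProductBilin ℝ ℝ c)

@[simp] theorem dotProductCLM_apply (c w : ι → ℝ) : dotProductCLM c w = c ⬝ᵥ w := rfl

theorem hasFDerivAt_dotProduct (c w : ι → ℝ) :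
    HasFDerivAt (fun w => c ⬝ᵥ w) (dotProductCLM c) w :=
  (dotProductCLM c).hasFDerivAt

theorem hasFDerivAt_dotProduct_mulVec (a : Matrix ι ι ℝ) (w : ι → ℝ) :
    HasFDerivAt (fun w => w ⬝ᵥ a *ᵥ w) (dotProductCLM (w ᵥ* a + a *ᵥ w)) w := by
  have h := HasFDerivAt.fun_sum (u := Finset.univ) fun i _ =>
    (hasFDerivAt_apply i w).mul (hasFDerivAt_dotProduct (a i) w)
  refine h.congr_fderiv ?_
  ext v
  simp only [_root_.sum_apply, _root_.add_apply, _root_.smul_apply, dotProductCLM_apply,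
    ContinuousLinearMap.proj_apply, smul_eq_mul, Finset.sum_add_distrib, add_dotProduct,
    ← dotProduct_mulVec]
  rfl

theorem Matrix.IsSymm.mulVec_dotProduct_comm {a : Matrix ι ι ℝ} (ha : a.IsSymm) (v w : ι → ℝ) :
    a *ᵥ v ⬝ᵥ w = a *ᵥ w ⬝ᵥ v := by
  rw [dotProduct_comm, dotProduct_mulVec, ← mulVec_transpose, ha.eq]

theorem Matrix.PosSemidef.dotProduct_mulVec_sq_le [DecidableEq ι] {a : Matrix ι ι ℝ}
    (ha : a.PosSemidef) (x y : ι → ℝ) : (x ⬝ᵥ a *ᵥ y) ^ 2 ≤ (x ⬝ᵥ a *ᵥ x) * (y ⬝ᵥ a *ᵥ y) := by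
  have h := LinearMap.BilinForm.apply_mul_apply_le_of_forall_zero_le (toLinearMap₂' ℝ a)
    (fun x => by simpa [toLinearMap₂'_apply'] using ha.dotProduct_mulVec_nonneg x) x y
  simp only [toLinearMap₂'_apply'] at h
  rwa [dotProduct_comm y, (isHermitian_iff_isSymm.mp ha.isHermitian).mulVec_dotProduct_comm,
    dotProduct_comm (a *ᵥ y), ← sq] at h

noncomputable def kropinaEnergy (a : Matrix ι ι ℝ) (b w : ι → ℝ) : ℝ :=
  1 / 2 * ((w ⬝ᵥ a *ᵥ w) / (b ⬝ᵥ w)) ^ 2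

noncomputable def kropinaTensor (a : Matrix ι ι ℝ) (b y : ι → ℝ) : Matrix ι ι ℝ :=
  let α2 := y ⬝ᵥ a *ᵥ y
  let β := b ⬝ᵥ y
  let a0 := a *ᵥ y
  (2 * α2 / β ^ 2) • a + (3 * α2 ^ 2 / β ^ 4) • vecMulVec b b
    - (4 * α2 / β ^ 3) • (vecMulVec a0 b + vecMulVec b a0) + (4 / β ^ 2) • vecMulVec a0 a0

theorem kropinaTensor_apply (a : Matrix ι ι ℝ) (b y : ι → ℝ) (i j : ι) :
    kropinaTensor a b y i j =
      (2 * (y ⬝ᵥ a *ᵥ y) / (b ⬝ᵥ y) ^ 2) * a i j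
        + (3 * (y ⬝ᵥ a *ᵥ y) ^ 2 / (b ⬝ᵥ y) ^ 4) * b i * b j
        - (4 * (y ⬝ᵥ a *ᵥ y) / (b ⬝ᵥ y) ^ 3) * ((a *ᵥ y) i * b j + (a *ᵥ y) j * b i)
        + (4 / (b ⬝ᵥ y) ^ 2) * ((a *ᵥ y) i * (a *ᵥ y) j) := by
  simp only [kropinaTensor, Matrix.add_apply, Matrix.sub_apply, Matrix.smul_apply, vecMulVec_apply,
    smul_eq_mul]
  ring

theorem dotProduct_kropinaTensor_mulVec (a : Matrix ι ι ℝ) (b y u v : ι → ℝ) :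
    u ⬝ᵥ kropinaTensor a b y *ᵥ v =
      (2 * (y ⬝ᵥ a *ᵥ y) / (b ⬝ᵥ y) ^ 2) * (u ⬝ᵥ a *ᵥ v)
        + (3 * (y ⬝ᵥ a *ᵥ y) ^ 2 / (b ⬝ᵥ y) ^ 4) * (b ⬝ᵥ u) * (b ⬝ᵥ v)
        - (4 * (y ⬝ᵥ a *ᵥ y) / (b ⬝ᵥ y) ^ 3)
            * ((a *ᵥ y ⬝ᵥ u) * (b ⬝ᵥ v) + (a *ᵥ y ⬝ᵥ v) * (b ⬝ᵥ u))
        + (4 / (b ⬝ᵥ y) ^ 2) * ((a *ᵥ y ⬝ᵥ u) * (a *ᵥ y ⬝ᵥ v)) := by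
  simp only [kropinaTensor, add_mulVec, sub_mulVec, smul_mulVec, vecMulVec_mulVec,
    dotProduct_add, dotProduct_sub, dotProduct_smul, smul_eq_mul, MulOpposite.smul_eq_mul_unop,
    MulOpposite.unop_op]
  simp only [dotProduct_comm u]
  ring

variable {a : Matrix ι ι ℝ} {b y : ι → ℝ}

theorem contDiffAt_kropinaEnergy (hy : b ⬝ᵥ y ≠ 0) : ContDiffAt ℝ 2 (kropinaEnergy a b) y := by
  unfold kropinaEnergy
  simp only [dotProduct, mulVec]
  fun_prop (disch := exact hy)

theorem fderiv_kropinaEnergy_apply (ha : a.IsSymm) (hy : b ⬝ᵥ y ≠ 0) (v : ι → ℝ) :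
    fderiv ℝ (kropinaEnergy a b) y v =
      (y ⬝ᵥ a *ᵥ y) * (2 * (b ⬝ᵥ y) * (a *ᵥ v ⬝ᵥ y) - (y ⬝ᵥ a *ᵥ y) * (b ⬝ᵥ v))
        / (b ⬝ᵥ y) ^ 3 := by
  have h : HasFDerivAt (kropinaEnergy a b) _ y :=
    ((hasFDerivAt_dotProduct_mulVec a y).div (hasFDerivAt_dotProduct b y) hy).pow 2
      |>.const_mul (1 / 2 : ℝ)
  rw [h.fderiv]
  simp only [_root_.smul_apply, _root_.sub_apply, dotProductCLM_apply, smul_eq_mul,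
    add_dotProduct, ← mulVec_transpose, ha.eq, ha.mulVec_dotProduct_comm y v, nsmul_eq_mul,
    Nat.reduceSub, Nat.cast_ofNat, pow_one]
  field_simp
  ring

open Filter Topology in
theorem iteratedFDeriv_two_kropinaEnergy (ha : a.IsSymm) (hy : b ⬝ᵥ y ≠ 0) (u v : ι → ℝ) :
    iteratedFDeriv ℝ 2 (kropinaEnergy a b) y ![u, v] = u ⬝ᵥ kropinaTensor a b y *ᵥ v := by
  rw [iteratedFDeriv_two_apply_eq_fderiv_fderiv_apply (contDiffAt_kropinaEnergy hy)]
  have hQ := hasFDerivAt_dotProduct_mulVec a y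
  have hL := hasFDerivAt_dotProduct b y
  have hφ : HasFDerivAt (fun w => (w ⬝ᵥ a *ᵥ w) *
      (2 * (b ⬝ᵥ w) * (a *ᵥ v ⬝ᵥ w) - (w ⬝ᵥ a *ᵥ w) * (b ⬝ᵥ v)) / (b ⬝ᵥ w) ^ 3) _ y :=
    (hQ.fun_mul (((hL.const_mul 2).fun_mul (hasFDerivAt_dotProduct (a *ᵥ v) y)).fun_sub
      (hQ.mul_const _))).div (hL.pow 3) (pow_ne_zero 3 hy)
  have hcone : ∀ᶠ w in 𝓝 y, b ⬝ᵥ w ≠ 0 := hL.continuousAt.eventually_ne hy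
  rw [(hφ.congr_of_eventuallyEq (hcone.mono fun w hw =>
    fderiv_kropinaEnergy_apply ha hw v)).fderiv, dotProduct_kropinaTensor_mulVec]
  simp only [_root_.smul_apply, _root_.sub_apply, _root_.add_apply, dotProductCLM_apply,
    smul_eq_mul, add_dotProduct, ← mulVec_transpose, ha.eq, nsmul_eq_mul,
    ha.mulVec_dotProduct_comm v y, dotProduct_comm (a *ᵥ v) u, Nat.reduceSub, Nat.cast_ofNat]
  field_simp
  ring

theorem kropinaTensor_isSymm (ha : a.IsSymm) : (kropinaTensor a b y).IsSymm :=
  IsSymm.ext fun i j => by simp only [kropinaTensor_apply, ha.apply]; ring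

theorem le_dotProduct_kropinaTensor_mulVec_self [DecidableEq ι] (ha : a.PosSemidef)
    (hy : b ⬝ᵥ y ≠ 0) (x : ι → ℝ) :
    2 / 3 * (y ⬝ᵥ a *ᵥ y) * (x ⬝ᵥ a *ᵥ x) / (b ⬝ᵥ y) ^ 2 ≤ x ⬝ᵥ kropinaTensor a b y *ᵥ x := by
  have hCS := ha.dotProduct_mulVec_sq_le x y
  rw [dotProduct_kropinaTensor_mulVec, dotProduct_comm (a *ᵥ y)]
  set α2 := y ⬝ᵥ a *ᵥ y
  set β := b ⬝ᵥ y
  set Q := x ⬝ᵥ a *ᵥ x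
  set p := x ⬝ᵥ a *ᵥ y
  set s := b ⬝ᵥ x
  have hsos : 2 * α2 / β ^ 2 * Q + 3 * α2 ^ 2 / β ^ 4 * s * s - 4 * α2 / β ^ 3 * (p * s + p * s)
      + 4 / β ^ 2 * (p * p) - 2 / 3 * α2 * Q / β ^ 2
      = ((4 * β * p - 3 * α2 * s) ^ 2 + 4 * β ^ 2 * (α2 * Q - p ^ 2)) / (3 * β ^ 4) := by
    field_simp
    ring
  have : 0 ≤ ((4 * β * p - 3 * α2 * s) ^ 2 + 4 * β ^ 2 * (α2 * Q - p ^ 2)) / (3 * β ^ 4) := by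
    have := sub_nonneg.2 (hCS.trans_eq (mul_comm Q α2))
    positivity
  linarith

theorem kropinaTensor_posDef [DecidableEq ι] (ha : a.PosDef) (hy : b ⬝ᵥ y ≠ 0) :
    (kropinaTensor a b y).PosDef := by
  have hy0 : y ≠ 0 := by rintro rfl; exact hy (dotProduct_zero b)
  refine .of_dotProduct_mulVec_pos (isHermitian_iff_isSymm.mpr
    (kropinaTensor_isSymm (isHermitian_iff_isSymm.mp ha.isHermitian))) fun x hx => ?_
  have hα := ha.dotProduct_mulVec_pos hy0
  have hQ := ha.dotProduct_mulVec_pos hx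
  simp only [star_trivial] at hα hQ ⊢
  exact lt_of_lt_of_le (by positivity)
    (le_dotProduct_kropinaTensor_mulVec_self ha.posSemidef hy x)

theorem kropina_fundamental_tensor_general (n : ℕ)
    (a : Matrix (Fin n) (Fin n) ℝ) (ha : a.PosDef)
    (b : Fin n → ℝ)
    (y : Fin n → ℝ) (hy : 0 < b ⬝ᵥ y) :
    let F : (Fin n → ℝ) → ℝ := fun w => (w ⬝ᵥ a.mulVec w) / (b ⬝ᵥ w)
    let α2 : ℝ := y ⬝ᵥ a.mulVec y
    let β : ℝ := b ⬝ᵥ y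
    let a0 : Fin n → ℝ := a.mulVec y
    let g : Matrix (Fin n) (Fin n) ℝ := Matrix.of fun i j =>
      (2 * α2 / β ^ 2) * a i j + (3 * α2 ^ 2 / β ^ 4) * b i * b j
        - (4 * α2 / β ^ 3) * (a0 i * b j + a0 j * b i)
        + (4 / β ^ 2) * (a0 i * a0 j)
    (∀ i j, g i j =
      iteratedFDeriv ℝ 2 (fun w => (1 / 2) * (F w) ^ 2) y
        ![Pi.single i 1, Pi.single j 1]) ∧
    g.PosDef := by
  intro F α2 β a0 g
  have hg : g = kropinaTensor a b y := Matrix.ext fun i j => (kropinaTensor_apply a b y i j).symm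
  refine ⟨fun i j => ?_, hg ▸ kropinaTensor_posDef ha hy.ne'⟩
  rw [hg, show (fun w => 1 / 2 * F w ^ 2) = kropinaEnergy a b from rfl,
    iteratedFDeriv_two_kropinaEnergy (isHermitian_iff_isSymm.mp ha.isHermitian) hy.ne',
    single_one_dotProduct, mulVec_single_one]
  rfl

theorem kropina_fundamental_tensor (n : ℕ)
    (a : Matrix (Fin n) (Fin n) ℝ) (ha : a.PosDef)
    (b : Fin n → ℝ) (hb : b ≠ 0)
    (y : Fin n → ℝ) (hy : 0 < b ⬝ᵥ y) :
    let F : (Fin n → ℝ) → ℝ := fun w => (w ⬝ᵥ a.mulVec w) / (b ⬝ᵥ w)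
    let α2 : ℝ := y ⬝ᵥ a.mulVec y
    let β : ℝ := b ⬝ᵥ y
    let a0 : Fin n → ℝ := a.mulVec y
    let g : Matrix (Fin n) (Fin n) ℝ := Matrix.of fun i j =>
      (2 * α2 / β ^ 2) * a i j + (3 * α2 ^ 2 / β ^ 4) * b i * b j
        - (4 * α2 / β ^ 3) * (a0 i * b j + a0 j * b i)
        + (4 / β ^ 2) * (a0 i * a0 j)
    (∀ i j, g i j =
      iteratedFDeriv ℝ 2 (fun w => (1 / 2) * (F w) ^ 2) y
        ![Pi.single i 1, Pi.single j 1]) ∧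
    g.PosDef :=
  kropina_fundamental_tensor_general n a ha b y hy
end

section
/- Let α₁, α₂ be Riemannian norms (α_i² positive definite quadratic forms in y) and β₁, β₂ nonzero linear forms on ℝⁿ. If α₂(y)²·β₁(y) = α₁(y)²·β₂(y) as polynomials in y, then there exists a positive constant f such that β₂ = f·β₁ and α₂² = f·α₁². -/
/-!
On the hyperplane `ker β₁` the identity reads `α₁² β₂ = 0`, and `α₁²` vanishes only at `0`, so
`ker β₁ ⊆ ker β₂` and hence `β₂ = f β₁`. Cancelling `β₁` gives `α₂² = f α₁²` off that hyperplane,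
and the parallelogram law extends this across it. Evaluating at a vector off the hyperplane, where
both quadratic forms are positive, shows `f > 0`.
-/

open Matrix

namespace QuadraticMap

theorem map_add_add_map_sub {R M N : Type*} [CommRing R] [AddCommGroup M] [Module R M]
    [AddCommGroup N] [Module R N] (Q : QuadraticMap R M N) (x y : M) :
    Q (x + y) + Q (x - y) = 2 • Q x + 2 • Q y := by
  rw [sub_eq_add_neg, QuadraticMap.map_add Q, QuadraticMap.map_add Q, polar_neg_right,
    QuadraticMap.map_neg]
  abel

variable {K V : Type*} [Field K] [AddCommGroup V] [Module K V]

theorem eq_zero_of_eq_zero_off_ker [NeZero (2 : K)] (Q : QuadraticForm K V)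
    {b : V →ₗ[K] K} (hb : b ≠ 0) (hQ : ∀ y, b y ≠ 0 → Q y = 0) : Q = 0 := by
  obtain ⟨z, hz⟩ := DFunLike.ne_iff.mp hb
  ext y
  by_cases hy : b y = 0
  · have key := Q.map_add_add_map_sub y z
    rw [hQ (y + z) (by simpa [hy] using hz), hQ (y - z) (by simpa [hy] using hz), hQ z hz] at key
    simpa [two_ne_zero] using key.symm
  · exact hQ y hy

theorem ker_le_ker_of_mul_eq_mul {Q₁ Q₂ : QuadraticForm K V} (hQ₁ : Q₁.Anisotropic)
    {b₁ b₂ : V →ₗ[K] K} (h : ∀ y, Q₂ y * b₁ y = Q₁ y * b₂ y) :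
    LinearMap.ker b₁ ≤ LinearMap.ker b₂ := by
  intro y hy
  rw [LinearMap.mem_ker] at hy ⊢
  have := h y
  rw [hy, mul_zero, eq_comm, mul_eq_zero] at this
  rcases this with h₀ | h₀
  · simp [hQ₁ y h₀]
  · exact h₀

end QuadraticMap

theorem LinearMap.exists_eq_smul_of_ker_le {K V : Type*} [Field K] [AddCommGroup V] [Module K V]
    {b₁ b₂ : V →ₗ[K] K} (h : LinearMap.ker b₁ ≤ LinearMap.ker b₂) : ∃ c : K, b₂ = c • b₁ := by
  have := mem_span_of_iInf_ker_le_ker (ι := Unit) (L := fun _ ↦ b₁) (K := b₂) (by simpa using h)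
  obtain ⟨c, hc⟩ := Submodule.mem_span_singleton.mp (by simpa [Set.range_const] using this)
  exact ⟨c, hc.symm⟩

theorem QuadraticMap.exists_pos_smul_of_mul_eq_mul {K V : Type*} [Field K] [LinearOrder K]
    [IsStrictOrderedRing K] [AddCommGroup V] [Module K V] {Q₁ Q₂ : QuadraticForm K V}
    (hQ₁ : Q₁.PosDef) (hQ₂ : Q₂.PosDef) {b₁ b₂ : V →ₗ[K] K} (hb₁ : b₁ ≠ 0)
    (h : ∀ y, Q₂ y * b₁ y = Q₁ y * b₂ y) :
    ∃ c : K, 0 < c ∧ b₂ = c • b₁ ∧ Q₂ = c • Q₁ := by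
  obtain ⟨c, rfl⟩ :=
    LinearMap.exists_eq_smul_of_ker_le (ker_le_ker_of_mul_eq_mul hQ₁.anisotropic h)
  have hQ : Q₂ = c • Q₁ := by
    rw [← sub_eq_zero]
    refine eq_zero_of_eq_zero_off_ker _ hb₁ fun y hy ↦ ?_
    have hy' : Q₂ y * b₁ y = c * Q₁ y * b₁ y := by
      rw [h y, LinearMap.smul_apply, smul_eq_mul]
      ring
    simpa [sub_eq_zero] using mul_right_cancel₀ hy hy'
  obtain ⟨z, hz⟩ := DFunLike.ne_iff.mp hb₁
  have hz₀ : z ≠ 0 := by rintro rfl; simp at hz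
  have hQz : 0 < c * Q₁ z := by simpa [hQ] using hQ₂ z hz₀
  exact ⟨c, pos_of_mul_pos_left hQz (hQ₁ z hz₀).le, rfl, hQ⟩

theorem Matrix.toQuadraticForm'_apply {R ι : Type*} [CommRing R] [Fintype ι] [DecidableEq ι]
    (a : Matrix ι ι R) (y : ι → R) : a.toQuadraticForm' y = y ⬝ᵥ a *ᵥ y := by
  simp [Matrix.toQuadraticForm', toLinearMap₂'_apply']

theorem kropina_isometry_conformal_factor_general (n : ℕ)
    (a₁ a₂ : Matrix (Fin n) (Fin n) ℝ) (ha₁ : a₁.PosDef) (ha₂ : a₂.PosDef)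
    (b₁ b₂ : (Fin n → ℝ) →ₗ[ℝ] ℝ) (hb₁ : b₁ ≠ 0)
    (heq : ∀ y : Fin n → ℝ,
      (y ⬝ᵥ a₂.mulVec y) * b₁ y = (y ⬝ᵥ a₁.mulVec y) * b₂ y) :
    ∃ f : ℝ, 0 < f ∧ (∀ y, b₂ y = f * b₁ y) ∧
      ∀ y : Fin n → ℝ, y ⬝ᵥ a₂.mulVec y = f * (y ⬝ᵥ a₁.mulVec y) := by
  obtain ⟨f, hf, hb, hQ⟩ := QuadraticMap.exists_pos_smul_of_mul_eq_mul ha₁.toQuadraticForm'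
    ha₂.toQuadraticForm' hb₁ (by simpa [Matrix.toQuadraticForm'_apply] using heq)
  refine ⟨f, hf, fun y ↦ by simp [hb], fun y ↦ ?_⟩
  simpa [Matrix.toQuadraticForm'_apply] using congr($hQ y)

theorem kropina_isometry_conformal_factor (n : ℕ)
    (a₁ a₂ : Matrix (Fin n) (Fin n) ℝ) (ha₁ : a₁.PosDef) (ha₂ : a₂.PosDef)
    (b₁ b₂ : (Fin n → ℝ) →ₗ[ℝ] ℝ) (hb₁ : b₁ ≠ 0) (hb₂ : b₂ ≠ 0)
    (heq : ∀ y : Fin n → ℝ,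
      (y ⬝ᵥ a₂.mulVec y) * b₁ y = (y ⬝ᵥ a₁.mulVec y) * b₂ y) :
    ∃ f : ℝ, 0 < f ∧ (∀ y, b₂ y = f * b₁ y) ∧
      ∀ y : Fin n → ℝ, y ⬝ᵥ a₂.mulVec y = f * (y ⬝ᵥ a₁.mulVec y) :=
  kropina_isometry_conformal_factor_general n a₁ a₂ ha₁ ha₂ b₁ b₂ hb₁ heq
end
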